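/- arXiv:1704.07579 — 2 statements merged into one kernel-verified Lean document; each statement's English description precedes it below -/
import Mathlib

section
/- Let m ≥ 1 and let q be a prime power with 3 dividing q+1; let F be the field with q elements. Embed GL_1(F) × GL_{2m}(F) into GL_{2m+1}(F) block-diagonally via ι(a, B) = diag(a, B). Let P₀ be a Sylow 3-subgroup of GL_{2m}(F) and let P = ι({1} × P₀). Then P is a Sylow 3-subgroup of GL_{2m+1}(F), and the normalizer of P in GL_{2m+1}(F) equals ι(GL_1(F) × N_{GL_{2m}(F)}(P₀)), i.e. it consists exactly of the block-diagonal matrices diag(a, B) with a ∈ Fˣ and B ∈ N_{GL_{2m}(F)}(P₀). -/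
/-!
Let `q = |F| ≡ 2 (mod 3)`. A Sylow `3`-subgroup `P₀` of `GL(V)`, `dim V = 2m`, fixes no nonzero
vector. Averaging over `P₀` (possible since `3 ≠ 0` in `F`) projects `V` onto the fixed space
`W` along a `P₀`-stable complement, so every element of `GL(W)`, extended by the identity on
that complement, centralises `P₀`; a `3`-element of `GL(W)` would then lie in `P₀` and act
trivially on `W`, hence `3 ∤ |GL(W)|` and `dim W ≤ 1`. Counting fixed points of the `3`-group
`P₀` gives `q ^ dim W ≡ q ^ 2m ≡ 1 (mod 3)`, so `dim W` is even and `W = 0`; the average of `P₀`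
is then `0`, so `P₀` fixes no nonzero row vector either.

If `A` normalises `P = diag(1, P₀)`, comparing first rows and columns of
`A diag(1, B) = diag(1, C) A` shows that the off-diagonal parts of the first row and column of
`A` are fixed by `P₀`, hence zero: `N(P)` lies in the block-diagonal copy of `Fˣ × GL(V)`, where
it is `Fˣ × N(P₀)`. A `3`-element `diag(a, B)` of `N(P)` has `a = 1` (as `3 ∤ q - 1`) and
`B ∈ P₀` (a `3`-element normalising a Sylow subgroup lies in it), so `P` contains every
`3`-element of its normaliser, and is therefore Sylow: a proper subgroup of a finite `3`-group
is properly contained in its normaliser.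
-/

open scoped Classical
open Matrix

noncomputable section

/-- The block-diagonal matrix `diag(a, B)` of size `(2m+1) × (2m+1)`, with the scalar `a` in
the upper-left corner and the `2m × 2m` matrix `B` in the lower-right block. -/
def embMat (m : ℕ) (F : Type) [Zero F] (a : F) (B : Matrix (Fin (2 * m)) (Fin (2 * m)) F) :
    Matrix (Fin (2 * m + 1)) (Fin (2 * m + 1)) F :=
  Matrix.of fun i j =>
    Fin.cases (Fin.cases a (fun _ => 0) j) (fun i' => Fin.cases 0 (fun j' => B i' j') j) i

open LinearMap (GeneralLinearGroup)

namespace LinearMap.IsProj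

variable {R V : Type*} [Ring R] [AddCommGroup V] [Module R V] {W : Submodule R V}
  {f : V →ₗ[R] V}

/-- `χ ↦ χ ⊕ id` with respect to the decomposition `V = W ⊕ ker f`. -/
def extendEnd (hf : IsProj W f) : Module.End R W →* Module.End R V where
  toFun χ := (1 - f) + W.subtype ∘ₗ χ ∘ₗ hf.codRestrict
  map_one' := by ext x; simp
  map_mul' χ χ' := by
    ext x
    have hff : f (f x) = f x := hf.map_id _ (hf.map_mem x)
    have hπ : hf.codRestrict (f x) = hf.codRestrict x := Subtype.ext (by simpa using hff)
    simp [hff, hπ, hf.map_id _ (Subtype.prop _)]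

@[simp] lemma extendEnd_apply_coe (hf : IsProj W f) (χ : Module.End R W) (w : W) :
    hf.extendEnd χ w = χ w := by
  simp [extendEnd, hf.map_id w w.2]

lemma commute_extendEnd (hf : IsProj W f) (χ : Module.End R W) {g : Module.End R V}
    (hgf : g * f = f) (hfg : f * g = f) : Commute g (hf.extendEnd χ) := by
  have hgW (w : W) : g w = w := by
    simpa [hf.map_id w w.2] using LinearMap.congr_fun hgf w
  have hgfx (x : V) : g (f x) = f x := LinearMap.congr_fun hgf x
  have hfgx (x : V) : f (g x) = f x := LinearMap.congr_fun hfg x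
  have hπ (x : V) : hf.codRestrict (g x) = hf.codRestrict x := Subtype.ext (by simp [hfgx])
  ext x
  simp only [extendEnd, Module.End.mul_apply, MonoidHom.coe_mk, OneHom.coe_mk, add_apply,
    sub_apply, Module.End.one_apply, coe_comp, Function.comp_apply, Submodule.coe_subtype,
    map_add, map_sub, hgfx, hgW, hfgx, hπ]

end LinearMap.IsProj

theorem Sylow.mem_of_mem_normalizer_of_pow_eq_one {G : Type*} [Group G] {p : ℕ}
    (P : Sylow p G) {g : G} {k : ℕ} (hN : g ∈ Subgroup.normalizer (P : Subgroup G))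
    (hg : g ^ p ^ k = 1) : g ∈ P := by
  have hz : IsPGroup p (Subgroup.zpowers g) := IsPGroup.of_card_dvd_pow (n := k)
    (by rw [Nat.card_zpowers]; exact orderOf_dvd_of_pow_eq_one hg)
  have hg' : g ∈ Subgroup.zpowers g ⊓ Subgroup.normalizer (P : Subgroup G) :=
    ⟨Subgroup.mem_zpowers g, hN⟩
  exact ((hz.inf_normalizer_sylow P).le hg').2

theorem IsPGroup.exists_sylow_eq_of_forall_mem_normalizer {G : Type*} [Group G] [Finite G]
    {p : ℕ} [Fact p.Prime] {P : Subgroup G} (hP : IsPGroup p P)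
    (h : ∀ g ∈ Subgroup.normalizer (P : Set G), (∃ k, g ^ p ^ k = 1) → g ∈ P) :
    ∃ S : Sylow p G, (S : Subgroup G) = P := by
  refine ⟨⟨P, hP, fun {Q} hQ hPQ => ?_⟩, rfl⟩
  by_contra hne
  have : Group.IsNilpotent Q := hQ.isNilpotent
  have hlt : P.subgroupOf Q < ⊤ :=
    lt_top_iff_ne_top.mpr fun htop => hne (le_antisymm (Subgroup.subgroupOf_eq_top.mp htop) hPQ)
  obtain ⟨g, hgN, hgP⟩ := SetLike.exists_of_lt (Group.normalizerCondition_of_isNilpotent _ hlt)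
  rw [← Subgroup.subgroupOf_normalizer_eq hPQ, Subgroup.mem_subgroupOf] at hgN
  obtain ⟨k, hk⟩ := hQ g
  exact hgP (Subgroup.mem_subgroupOf.mpr (h g hgN ⟨k, by simpa using congrArg Subtype.val hk⟩))

theorem Subgroup.exists_mul_eq_mul_of_mem_normalizer {G : Type*} [Group G] {H : Subgroup G}
    {g h : G} (hg : g ∈ normalizer (H : Set G)) (hh : h ∈ H) :
    (∃ h' ∈ H, g * h = h' * g) ∧ ∃ h' ∈ H, h * g = g * h' :=
  ⟨⟨g * h * g⁻¹, (mem_normalizer_iff.mp hg h).mp hh, by group⟩,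
    ⟨g⁻¹ * h * g, (mem_normalizer_iff''.mp hg h).mp hh, by group⟩⟩

theorem Subgroup.mem_normalizer_map_inr {M N : Type*} [Group M] [Group N] {H : Subgroup N}
    {x : M × N} :
    x ∈ normalizer (H.map (MonoidHom.inr M N) : Set (M × N)) ↔
      x.2 ∈ normalizer (H : Set N) := by
  have hmem (y : M × N) : y ∈ H.map (MonoidHom.inr M N) ↔ y.1 = 1 ∧ y.2 ∈ H := by
    constructor
    · rintro ⟨n, hn, rfl⟩
      exact ⟨rfl, hn⟩
    · rintro ⟨h1, h2⟩
      exact ⟨y.2, h2, Prod.ext h1.symm rfl⟩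
  simp only [mem_normalizer_iff, hmem, Prod.fst_mul, Prod.snd_mul, Prod.fst_inv, Prod.snd_inv]
  constructor
  · intro hx n
    simpa using hx (1, n)
  · intro hx y
    rw [hx y.2]
    simp

theorem Nat.pow_modEq_one_iff_even_of_three_dvd_succ {q n : ℕ} (h3 : 3 ∣ q + 1) :
    q ^ n ≡ 1 [MOD 3] ↔ Even n := by
  have hq : (q : ZMod 3) = -1 :=
    eq_neg_of_add_eq_zero_left (by exact_mod_cast (ZMod.natCast_eq_zero_iff _ _).mpr h3)
  rw [← ZMod.natCast_eq_natCast_iff]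
  push_cast
  rw [hq]
  exact neg_one_pow_eq_one_iff_even (by decide)

section FiniteField

variable {F : Type*} [Field F] [Fintype F]

theorem natCast_ne_zero_of_dvd_card_add_one {p : ℕ} (hp : p ∣ Fintype.card F + 1) :
    (p : F) ≠ 0 := by
  intro h
  obtain ⟨c, hc⟩ := hp
  have : ((Fintype.card F + 1 : ℕ) : F) = 0 := by rw [hc]; push_cast; rw [h, zero_mul]
  rw [Nat.cast_add, FiniteField.cast_card_eq_zero, zero_add, Nat.cast_one] at this
  exact one_ne_zero this

theorem Units.eq_one_of_pow_three_pow_eq_one (h3 : 3 ∣ Fintype.card F + 1) {a : Fˣ} {k : ℕ}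
    (ha : a ^ 3 ^ k = 1) : a = 1 := by
  have hcard := Fintype.one_lt_card (α := F)
  have hcop : (Nat.card Fˣ).Coprime (3 ^ k) := by
    rw [Nat.card_eq_fintype_card, Fintype.card_units]
    exact Nat.Coprime.pow_right _ (Nat.prime_three.coprime_iff_not_dvd.mpr (by omega)).symm
  exact hcop.pow_left_bijective.injective (by rwa [one_pow])

theorem Matrix.dvd_card_GL_of_dvd_card_add_one {p : ℕ} (hp : p ∣ Fintype.card F + 1) {d : ℕ}
    (hd : 2 ≤ d) : p ∣ Nat.card (GL (Fin d) F) := by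
  set q := Fintype.card F
  have hfactor : q ^ d - q ^ (d - 2) = q ^ (d - 2) * ((q + 1) * (q - 1)) := by
    rw [← Nat.sq_sub_sq, one_pow, Nat.mul_sub, mul_one, ← pow_add, Nat.sub_add_cancel hd]
  rw [Matrix.card_GL_field]
  refine dvd_trans ?_ (Finset.dvd_prod_of_mem _ (Finset.mem_univ ⟨d - 2, by omega⟩))
  rw [Fin.val_mk, hfactor]
  exact Dvd.dvd.mul_left (Dvd.dvd.mul_right hp _) _

end FiniteField

namespace LinearMap.GeneralLinearGroup

variable {F V : Type*} [Field F] [AddCommGroup V] [Module F V]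

abbrev subgroupRep (P : Subgroup (GeneralLinearGroup F V)) : Representation F P V :=
  (Units.coeHom _).comp P.subtype

instance [Finite F] [FiniteDimensional F V] : Finite (GeneralLinearGroup F V) :=
  have : Finite (Module.End F V) := Module.finite_of_finite F
  inferInstance

theorem natCard_eq_card_GL_fin [FiniteDimensional F V] :
    Nat.card (GeneralLinearGroup F V) = Nat.card (GL (Fin (Module.finrank F V)) F) :=
  Nat.card_congr ((congrLinearEquiv (Module.finBasis F V).equivFun).trans
    Matrix.GeneralLinearGroup.toLin.symm).toEquiv

end LinearMap.GeneralLinearGroup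

section GeneralLinearGroup

open LinearMap.GeneralLinearGroup

variable {F V : Type*} [Field F] [AddCommGroup V] [Module F V]

theorem IsPGroup.card_pow_finrank_modEq_card_pow_finrank_invariants [Fintype F]
    [FiniteDimensional F V] {p : ℕ} [Fact p.Prime] {P : Subgroup (GeneralLinearGroup F V)}
    (hP : IsPGroup p P) :
    Fintype.card F ^ Module.finrank F V ≡
      Fintype.card F ^ Module.finrank F (subgroupRep P).invariants [MOD p] := by
  have : Finite V := Module.finite_of_finite F
  have hfix : Nat.card (MulAction.fixedPoints P V) = Nat.card (subgroupRep P).invariants := rfl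
  have h := hP.card_modEq_card_fixedPoints V
  rwa [hfix, Module.natCard_eq_pow_finrank (K := F) (V := V),
    Module.natCard_eq_pow_finrank (K := F) (V := (subgroupRep P).invariants),
    Nat.card_eq_fintype_card] at h

theorem Sylow.not_dvd_card_GL_invariants [Finite F] [FiniteDimensional F V] {p : ℕ}
    [Fact p.Prime] (hp : (p : F) ≠ 0) (P : Sylow p (GeneralLinearGroup F V)) :
    ¬ p ∣ Nat.card (GeneralLinearGroup F (subgroupRep P.toSubgroup).invariants) := by
  set ρ := subgroupRep P.toSubgroup
  intro hdvd
  obtain ⟨χ, hχ⟩ := exists_prime_orderOf_dvd_card' p hdvd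
  have := Fintype.ofFinite P
  obtain ⟨k, hk⟩ := (IsPGroup.iff_card (p := p)).mp P.isPGroup'
  have : Invertible (Fintype.card P : F) := invertibleOfNonzero
    (by rw [← Nat.card_eq_fintype_card, hk]; push_cast; exact pow_ne_zero _ hp)
  have hπ := ρ.isProj_averageMap
  set g : GeneralLinearGroup F V := Units.map hπ.extendEnd χ
  have hcomm (h : P) : Commute (h : GeneralLinearGroup F V) g := by
    refine Units.ext (hπ.commute_extendEnd χ ?_ ?_)
    · ext x
      exact ρ.averageMap_invariant x h
    · rw [show ((h : GeneralLinearGroup F V) : Module.End F V) = ρ h from rfl,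
        Representation.averageMap, ← ρ.asAlgebraHom_single_one h, ← map_mul,
        GroupAlgebra.mul_average_right]
  have hgP : g ∈ P := by
    refine P.mem_of_mem_normalizer_of_pow_eq_one (k := 1) ?_ ?_
    · exact Subgroup.centralizer_le_normalizer _ (Subgroup.mem_centralizer_iff.mpr
        fun h hh => (hcomm ⟨h, hh⟩).eq)
    · rw [pow_one, ← map_pow, orderOf_dvd_iff_pow_eq_one.mp hχ.dvd, map_one]
  have hχ1 : χ = 1 := by
    ext w
    simpa [ρ, g] using w.2 ⟨g, hgP⟩
  rw [hχ1, orderOf_one] at hχ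
  exact (Fact.out : p.Prime).one_lt.ne hχ

theorem Sylow.invariants_eq_bot_of_three_dvd_card_add_one [Fintype F] [FiniteDimensional F V]
    (h3 : 3 ∣ Fintype.card F + 1) (hV : Even (Module.finrank F V))
    (P : Sylow 3 (GeneralLinearGroup F V)) : (subgroupRep P.toSubgroup).invariants = ⊥ := by
  have : Fact (Nat.Prime 3) := ⟨Nat.prime_three⟩
  set W := (subgroupRep P.toSubgroup).invariants
  have hW : Even (Module.finrank F W) := by
    rw [← Nat.pow_modEq_one_iff_even_of_three_dvd_succ h3] at hV ⊢
    exact P.isPGroup'.card_pow_finrank_modEq_card_pow_finrank_invariants.symm.trans hV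
  have hW2 : ¬ 2 ≤ Module.finrank F W := fun h2 =>
    P.not_dvd_card_GL_invariants (natCast_ne_zero_of_dvd_card_add_one h3)
      (natCard_eq_card_GL_fin (F := F) (V := W) ▸ Matrix.dvd_card_GL_of_dvd_card_add_one h3 h2)
  obtain ⟨k, hk⟩ := hW
  exact Submodule.finrank_eq_zero.mp (by omega)

end GeneralLinearGroup

theorem Sylow.eq_zero_of_forall_mulVec_eq_self {F ι : Type*} [Field F] [Fintype F] [Fintype ι]
    [DecidableEq ι] (h3 : 3 ∣ Fintype.card F + 1) (hι : Even (Fintype.card ι))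
    (P : Sylow 3 (GL ι F)) {v : ι → F} (hv : ∀ B ∈ P, (B : Matrix ι ι F) *ᵥ v = v) :
    v = 0 := by
  have : Fact (Nat.Prime 3) := ⟨Nat.prime_three⟩
  have hQ := Sylow.invariants_eq_bot_of_three_dvd_card_add_one h3
    (by rwa [Module.finrank_fintype_fun_eq_card])
    (P.mapSurjective Matrix.GeneralLinearGroup.toLin.surjective)
  rw [← Submodule.mem_bot F, ← hQ]
  rintro ⟨_, B, hB, rfl⟩
  exact hv B hB

theorem Matrix.eq_zero_of_forall_vecMul_eq_self {F ι : Type*} [Field F] [Fintype ι]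
    [DecidableEq ι] {H : Subgroup (GL ι F)} [Finite H] (hH : (Nat.card H : F) ≠ 0)
    (hfix : ∀ v : ι → F, (∀ B ∈ H, (B : Matrix ι ι F) *ᵥ v = v) → v = 0)
    {r : ι → F} (hr : ∀ B ∈ H, r ᵥ* (B : Matrix ι ι F) = r) : r = 0 := by
  have := Fintype.ofFinite H
  set T : Matrix ι ι F := ∑ B : H, ((B : GL ι F) : Matrix ι ι F)
  have hT : T = 0 := by
    refine Matrix.ext_of_mulVec_single fun j => ?_
    rw [Matrix.zero_mulVec]
    refine hfix _ fun B hB => ?_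
    rw [Matrix.mulVec_mulVec, Finset.mul_sum]
    exact congrArg (· *ᵥ _) (Fintype.sum_equiv (Equiv.mulLeft ⟨B, hB⟩) _ _ fun C => rfl)
  have hrT : r ᵥ* T = (Nat.card H : F) • r := by
    simp [T, Matrix.vecMul_sum, hr, Nat.card_eq_fintype_card, ← Nat.cast_smul_eq_nsmul F]
  rw [hT, Matrix.vecMul_zero] at hrT
  exact (smul_eq_zero.mp hrT.symm).resolve_left hH

section embMat

variable {m : ℕ} {F : Type}

section Zero

variable [Zero F] (a : F) (B : Matrix (Fin (2 * m)) (Fin (2 * m)) F)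

@[simp] lemma embMat_apply_zero_zero : embMat m F a B 0 0 = a := rfl
@[simp] lemma embMat_apply_zero_succ (j : Fin (2 * m)) : embMat m F a B 0 j.succ = 0 := rfl
@[simp] lemma embMat_apply_succ_zero (i : Fin (2 * m)) : embMat m F a B i.succ 0 = 0 := rfl
@[simp] lemma embMat_apply_succ_succ (i j : Fin (2 * m)) :
    embMat m F a B i.succ j.succ = B i j := rfl
@[simp] lemma submatrix_succ_succ_embMat :
    (embMat m F a B).submatrix Fin.succ Fin.succ = B := rfl

lemma embMat_inj {a' : F} {B' : Matrix (Fin (2 * m)) (Fin (2 * m)) F} :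
    embMat m F a B = embMat m F a' B' ↔ a = a' ∧ B = B' := by
  refine ⟨fun h => ⟨by simpa using congrFun (congrFun h 0) 0, ?_⟩,
    fun ⟨ha, hB⟩ => ha ▸ hB ▸ rfl⟩
  ext i j
  simpa using congrFun (congrFun h i.succ) j.succ

lemma eq_embMat_of_forall_eq_zero {M : Matrix (Fin (2 * m + 1)) (Fin (2 * m + 1)) F}
    (hcol : ∀ i : Fin (2 * m), M i.succ 0 = 0) (hrow : ∀ j : Fin (2 * m), M 0 j.succ = 0) :
    M = embMat m F (M 0 0) (M.submatrix Fin.succ Fin.succ) := by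
  ext i j
  cases i using Fin.cases <;> cases j using Fin.cases <;> simp [hcol, hrow]

end Zero

lemma embMat_mul [Semiring F] (a a' : F) (B B' : Matrix (Fin (2 * m)) (Fin (2 * m)) F) :
    embMat m F a B * embMat m F a' B' = embMat m F (a * a') (B * B') := by
  ext i j
  cases i using Fin.cases <;> cases j using Fin.cases <;> simp [Matrix.mul_apply, Fin.sum_univ_succ]

lemma embMat_one [Semiring F] : embMat m F 1 (1 : Matrix (Fin (2 * m)) (Fin (2 * m)) F) = 1 := by
  ext i j
  cases i using Fin.cases <;> cases j using Fin.cases <;>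
    simp [Matrix.one_apply, Fin.succ_ne_zero, (Fin.succ_ne_zero _).symm]

lemma det_embMat [CommRing F] (a : F) (B : Matrix (Fin (2 * m)) (Fin (2 * m)) F) :
    (embMat m F a B).det = a * B.det := by
  simp [Matrix.det_succ_column_zero, Fin.sum_univ_succ]

lemma embMat_fixed_of_mul_eq_mul [Semiring F] {M : Matrix (Fin (2 * m + 1)) (Fin (2 * m + 1)) F}
    {B C : Matrix (Fin (2 * m)) (Fin (2 * m)) F} (h : M * embMat m F 1 B = embMat m F 1 C * M) :
    C *ᵥ (fun i => M i.succ 0) = (fun i => M i.succ 0) ∧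
      (fun j => M 0 j.succ) ᵥ* B = (fun j => M 0 j.succ) := by
  constructor
  · ext i
    simpa [Matrix.mul_apply, Fin.sum_univ_succ, Matrix.mulVec, dotProduct] using
      (congrFun (congrFun h i.succ) 0).symm
  · ext j
    simpa [Matrix.mul_apply, Fin.sum_univ_succ, Matrix.vecMul, dotProduct] using
      congrFun (congrFun h 0) j.succ

end embMat

section BlockDiag

def blockDiagHom (m : ℕ) (F : Type) [Semiring F] :
    Fˣ × GL (Fin (2 * m)) F →* GL (Fin (2 * m + 1)) F :=
  (Units.map
    { toFun := fun x => embMat m F x.1 x.2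
      map_one' := embMat_one
      map_mul' := fun _ _ => (embMat_mul _ _ _ _).symm }).comp
    (MulEquiv.prodUnits.symm : Fˣ × GL (Fin (2 * m)) F ≃* _).toMonoidHom

variable {m : ℕ} {F : Type}

@[simp] lemma coe_blockDiagHom [Semiring F] (x : Fˣ × GL (Fin (2 * m)) F) :
    (blockDiagHom m F x : Matrix (Fin (2 * m + 1)) (Fin (2 * m + 1)) F) = embMat m F x.1 x.2 :=
  rfl

lemma blockDiagHom_injective [Semiring F] : Function.Injective (blockDiagHom m F) :=
  fun x y h => by
    obtain ⟨h1, h2⟩ := (embMat_inj _ _).mp (congrArg Units.val h)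
    exact Prod.ext (Units.ext h1) (Units.ext h2)

theorem blockDiagHom_mem_normalizer_iff [Semiring F] {P₀ : Subgroup (GL (Fin (2 * m)) F)}
    {x : Fˣ × GL (Fin (2 * m)) F} :
    blockDiagHom m F x ∈ Subgroup.normalizer
        ((P₀.map ((blockDiagHom m F).comp (MonoidHom.inr _ _)) : Subgroup _) :
          Set (GL (Fin (2 * m + 1)) F)) ↔
      x.2 ∈ Subgroup.normalizer (P₀ : Set (GL (Fin (2 * m)) F)) := by
  rw [← Subgroup.map_map, ← Subgroup.mem_comap,
    Subgroup.comap_normalizer_eq_of_le_range (Subgroup.map_le_range _ _),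
    Subgroup.comap_map_eq_self_of_injective blockDiagHom_injective,
    Subgroup.mem_normalizer_map_inr]

theorem normalizer_map_blockDiagHom_le_range [Field F] [Fintype F] (h3 : 3 ∣ Fintype.card F + 1)
    (P₀ : Sylow 3 (GL (Fin (2 * m)) F)) :
    Subgroup.normalizer
        ((P₀.map ((blockDiagHom m F).comp (MonoidHom.inr _ _)) : Subgroup _) :
          Set (GL (Fin (2 * m + 1)) F)) ≤ (blockDiagHom m F).range := by
  intro A hA
  have : Fact (Nat.Prime 3) := ⟨Nat.prime_three⟩
  have hfix := fun v => P₀.eq_zero_of_forall_mulVec_eq_self h3 (by simp) (v := v)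
  have hcard : (Nat.card P₀ : F) ≠ 0 := by
    obtain ⟨k, hk⟩ := (IsPGroup.iff_card (p := 3)).mp P₀.isPGroup'
    rw [hk, Nat.cast_pow]
    exact pow_ne_zero _ (natCast_ne_zero_of_dvd_card_add_one h3)
  have hmat {B C : GL (Fin (2 * m)) F} {X : GL (Fin (2 * m + 1)) F}
      (h : X * blockDiagHom m F (1, B) = blockDiagHom m F (1, C) * X) :
      (X : Matrix (Fin (2 * m + 1)) (Fin (2 * m + 1)) F) * embMat m F 1 B =
        embMat m F 1 C * X := by
    simpa using congrArg Units.val h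
  have hcol :
      ∀ i : Fin (2 * m), (A : Matrix (Fin (2 * m + 1)) (Fin (2 * m + 1)) F) i.succ 0 = 0 := by
    refine congrFun (hfix _ fun C hC => ?_)
    obtain ⟨_, ⟨B, hB, rfl⟩, h⟩ :=
      (Subgroup.exists_mul_eq_mul_of_mem_normalizer hA ⟨C, hC, rfl⟩).2
    exact (embMat_fixed_of_mul_eq_mul (hmat h.symm)).1
  have hrow :
      ∀ j : Fin (2 * m), (A : Matrix (Fin (2 * m + 1)) (Fin (2 * m + 1)) F) 0 j.succ = 0 := by
    refine congrFun (Matrix.eq_zero_of_forall_vecMul_eq_self hcard hfix fun B hB => ?_)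
    obtain ⟨_, ⟨C, hC, rfl⟩, h⟩ :=
      (Subgroup.exists_mul_eq_mul_of_mem_normalizer hA ⟨B, hB, rfl⟩).1
    exact (embMat_fixed_of_mul_eq_mul (hmat h)).2
  have hA := eq_embMat_of_forall_eq_zero hcol hrow
  have hdet := (Matrix.isUnits_det_units A).ne_zero
  rw [hA, det_embMat] at hdet
  obtain ⟨ha, hD⟩ := mul_ne_zero_iff.mp hdet
  exact ⟨(Units.mk0 _ ha, Matrix.GeneralLinearGroup.mkOfDetNeZero _ hD), Units.ext hA.symm⟩

end BlockDiag

theorem sylow_normalizer_GL_odd_general (m q : ℕ)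
    (h3 : 3 ∣ q + 1) (F : Type) [Field F] [Fintype F] (hF : Fintype.card F = q)
    (P₀ : Sylow 3 (GL (Fin (2 * m)) F))
    (P : Subgroup (GL (Fin (2 * m + 1)) F))
    (hP : ∀ A : GL (Fin (2 * m + 1)) F, A ∈ P ↔
      ∃ B : GL (Fin (2 * m)) F, B ∈ P₀ ∧
        (A : Matrix (Fin (2 * m + 1)) (Fin (2 * m + 1)) F) =
          embMat m F 1 (B : Matrix (Fin (2 * m)) (Fin (2 * m)) F)) :
    (∃ S : Sylow 3 (GL (Fin (2 * m + 1)) F), (S : Subgroup (GL (Fin (2 * m + 1)) F)) = P) ∧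
    (∀ A : GL (Fin (2 * m + 1)) F, A ∈ Subgroup.normalizer (P : Set (GL (Fin (2 * m + 1)) F)) ↔
      ∃ (a : Fˣ) (B : GL (Fin (2 * m)) F),
        B ∈ Subgroup.normalizer ((P₀ : Subgroup (GL (Fin (2 * m)) F)) : Set (GL (Fin (2 * m)) F)) ∧
        (A : Matrix (Fin (2 * m + 1)) (Fin (2 * m + 1)) F) =
          embMat m F (a : F) (B : Matrix (Fin (2 * m)) (Fin (2 * m)) F)) := by
  subst hF
  have : Fact (Nat.Prime 3) := ⟨Nat.prime_three⟩
  obtain rfl : P = P₀.map ((blockDiagHom m F).comp (MonoidHom.inr _ _)) := by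
    ext A
    simp only [hP, Subgroup.mem_map, MonoidHom.comp_apply, MonoidHom.inr_apply, Units.ext_iff,
      coe_blockDiagHom, Units.val_one, eq_comm]
    rfl
  have hle := normalizer_map_blockDiagHom_le_range h3 P₀
  refine ⟨(P₀.isPGroup'.map _).exists_sylow_eq_of_forall_mem_normalizer ?_, fun A => ⟨?_, ?_⟩⟩
  · rintro g hg ⟨k, hk⟩
    obtain ⟨x, rfl⟩ := hle hg
    rw [← map_pow, ← map_one (blockDiagHom m F)] at hk
    have hx := blockDiagHom_injective hk
    have hx1 : x.1 = 1 := Units.eq_one_of_pow_three_pow_eq_one h3 (congrArg Prod.fst hx)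
    have hx2 : x.2 ∈ P₀ := P₀.mem_of_mem_normalizer_of_pow_eq_one
      (blockDiagHom_mem_normalizer_iff.mp hg) (congrArg Prod.snd hx)
    exact ⟨x.2, hx2, by rw [MonoidHom.comp_apply, MonoidHom.inr_apply, ← hx1]⟩
  · intro hA
    obtain ⟨x, rfl⟩ := hle hA
    exact ⟨x.1, x.2, blockDiagHom_mem_normalizer_iff.mp hA, rfl⟩
  · rintro ⟨a, B, hB, hA⟩
    obtain rfl : A = blockDiagHom m F (a, B) := Units.ext hA
    exact blockDiagHom_mem_normalizer_iff.mpr hB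

/-- Let `m ≥ 1`, `q` a prime power with `3 ∣ q + 1`, `F` the field with `q` elements, and
`P₀` a Sylow 3-subgroup of `GL_{2m}(F)`.  Let `P` be the image of `{1} × P₀` under the
block-diagonal embedding `ι(a, B) = diag(a, B)` of `GL_1(F) × GL_{2m}(F)` into
`GL_{2m+1}(F)`.  Then `P` is a Sylow 3-subgroup of `GL_{2m+1}(F)`, and its normalizer in
`GL_{2m+1}(F)` consists exactly of the block-diagonal matrices `diag(a, B)` with `a ∈ Fˣ`
and `B ∈ N_{GL_{2m}(F)}(P₀)`. -/
theorem sylow_normalizer_GL_odd (m q : ℕ) (hm : 1 ≤ m) (hq : IsPrimePow q)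
    (h3 : 3 ∣ q + 1) (F : Type) [Field F] [Fintype F] (hF : Fintype.card F = q)
    (P₀ : Sylow 3 (GL (Fin (2 * m)) F))
    (P : Subgroup (GL (Fin (2 * m + 1)) F))
    (hP : ∀ A : GL (Fin (2 * m + 1)) F, A ∈ P ↔
      ∃ B : GL (Fin (2 * m)) F, B ∈ P₀ ∧
        (A : Matrix (Fin (2 * m + 1)) (Fin (2 * m + 1)) F) =
          embMat m F 1 (B : Matrix (Fin (2 * m)) (Fin (2 * m)) F)) :
    (∃ S : Sylow 3 (GL (Fin (2 * m + 1)) F), (S : Subgroup (GL (Fin (2 * m + 1)) F)) = P) ∧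
    (∀ A : GL (Fin (2 * m + 1)) F, A ∈ Subgroup.normalizer (P : Set (GL (Fin (2 * m + 1)) F)) ↔
      ∃ (a : Fˣ) (B : GL (Fin (2 * m)) F),
        B ∈ Subgroup.normalizer ((P₀ : Subgroup (GL (Fin (2 * m)) F)) : Set (GL (Fin (2 * m)) F)) ∧
        (A : Matrix (Fin (2 * m + 1)) (Fin (2 * m + 1)) F) =
          embMat m F (a : F) (B : Matrix (Fin (2 * m)) (Fin (2 * m)) F)) :=
  sylow_normalizer_GL_odd_general m q h3 F hF P₀ P hP
end
end

section
/- Let p be a prime, K a finite group with Q a Sylow p-subgroup of K, and m ≥ 1. Let H = K ≀ S_m be the wreath product, realized as the semidirect product of K^m (functions from {1,…,m} to K) by S_m acting by permuting coordinates, and write elements of H as (x₁,…,x_m; z) with x_i ∈ K, z ∈ S_m. Let R be a Sylow p-subgroup of S_m and let P = Q ≀ R = {(x₁,…,x_m; z) : each x_i ∈ Q, z ∈ R}. Then P is a Sylow p-subgroup of H, and the normalizer of P in H equals { (x₁,…,x_m; z) : each x_i ∈ N_K(Q), z ∈ N_{S_m}(R), and x_i⁻¹x_j ∈ Q whenever i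 and j lie in the same R-orbit on {1,…,m} }. -/
open scoped Classical

noncomputable section

/-- The permutation action of `S_m` on the direct power `K^m`, as a homomorphism into the
automorphism group; this is the action used to form the wreath product `K ≀ S_m`. -/
def wreathAction (m : ℕ) (K : Type) [Group K] :
    Equiv.Perm (Fin m) →* MulAut (Fin m → K) where
  toFun σ :=
    { toFun := fun f => f ∘ σ.symm
      invFun := fun f => f ∘ σ
      left_inv := fun f => by funext i; simp
      right_inv := fun f => by funext i; simp
      map_mul' := fun f g => rfl }
  map_one' := by ext f i; rfl
  map_mul' σ τ := by ext f i; rfl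

/-- The wreath product `K ≀ S_m`, realized as the semidirect product of `K^m` by `S_m`
permuting the coordinates. -/
abbrev WreathProductSymm (K : Type) [Group K] (m : ℕ) : Type :=
  SemidirectProduct (Fin m → K) (Equiv.Perm (Fin m)) (wreathAction m K)

/-!
`Q ≀ R` has order `|Q|^m |R|`, which is the full `p`-part of `|K|^m · m!`, so it is Sylow.
For `g = (x; σ)` one has `g⁻¹ (y; τ) g = (x_{σi}⁻¹ y_{σi} x_{τ⁻¹σi}; σ⁻¹τσ)`. Testing this on the
elements `(q,…,q; 1)` and `(1,…,1; r)` of `Q ≀ R` shows that an element of the normalizer satisfies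
the three conditions; conversely, writing `x_j⁻¹ y_j x_{τ⁻¹j} = (x_j⁻¹ y_j x_j)(x_j⁻¹ x_{τ⁻¹j})`
shows that the conditions make `g⁻¹ (Q ≀ R) g ⊆ Q ≀ R`, and they are stable under inversion.
-/

theorem Subgroup.card_pi {ι : Type*} [Fintype ι] {G : ι → Type*} [∀ i, Group (G i)]
    (H : ∀ i, Subgroup (G i)) :
    Nat.card (Subgroup.pi Set.univ H) = ∏ i, Nat.card (H i) := by
  rw [← Nat.card_pi]
  exact Nat.card_congr
    ((Equiv.subtypeEquivRight fun _ => by simp [Subgroup.mem_pi]).trans (Equiv.subtypePiEquivPi))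

instance SemidirectProduct.instFinite {N G : Type*} [Group N] [Group G] [Finite N] [Finite G]
    {φ : G →* MulAut N} : Finite (N ⋊[φ] G) :=
  Finite.of_equiv _ SemidirectProduct.equivProd.symm

namespace Sylow

variable {p : ℕ} [Fact p.Prime]

def pi {ι : Type*} [Fintype ι] {G : ι → Type*} [∀ i, Group (G i)] [∀ i, Finite (G i)]
    (P : ∀ i, Sylow p (G i)) : Sylow p (∀ i, G i) :=
  Sylow.ofCard (Subgroup.pi Set.univ fun i => P i) <| by
    rw [Subgroup.card_pi, Nat.card_pi, Nat.factorization_prod fun i _ => Nat.card_pos.ne',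
      Finset.prod_congr rfl fun i _ => card_eq_multiplicity (P i), Finset.prod_pow_eq_pow_sum]
    simp

theorem mem_pi {ι : Type*} [Fintype ι] {G : ι → Type*} [∀ i, Group (G i)] [∀ i, Finite (G i)]
    {P : ∀ i, Sylow p (G i)} {g : ∀ i, G i} : g ∈ pi P ↔ ∀ i, g i ∈ P i :=
  (Subgroup.mem_pi _).trans <| forall_congr' fun _ => imp_iff_right (Set.mem_univ _)

end Sylow

theorem SemidirectProduct.exists_sylow_eq {p : ℕ} [Fact p.Prime] {N G : Type*} [Group N]
    [Group G] [Finite N] [Finite G] {φ : G →* MulAut N} (A : Sylow p N) (B : Sylow p G)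
    (P : Subgroup (N ⋊[φ] G)) (hP : ∀ g, g ∈ P ↔ g.left ∈ A ∧ g.right ∈ B) :
    ∃ S : Sylow p (N ⋊[φ] G), (S : Subgroup _) = P := by
  have hcard : Nat.card P = Nat.card A * Nat.card B := by
    rw [← Nat.card_prod]
    exact Nat.card_congr
      { toFun := fun g => (⟨g.1.left, ((hP g).1 g.2).1⟩, ⟨g.1.right, ((hP g).1 g.2).2⟩)
        invFun := fun x => ⟨⟨x.1, x.2⟩, (hP _).2 ⟨x.1.2, x.2.2⟩⟩
        left_inv := fun _ => rfl
        right_inv := fun _ => rfl }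
  refine ⟨Sylow.ofCard P ?_, rfl⟩
  rw [hcard, Sylow.card_eq_multiplicity A, Sylow.card_eq_multiplicity B, card,
    Nat.factorization_mul Nat.card_pos.ne' Nat.card_pos.ne', Finsupp.add_apply, pow_add]

namespace WreathProductSymm

open Equiv SemidirectProduct

variable {K : Type} [Group K] {m : ℕ}

theorem inv_left_apply (g : WreathProductSymm K m) (i : Fin m) :
    g⁻¹.left i = (g.left (g.right i))⁻¹ := rfl

theorem conj_left_apply (g h : WreathProductSymm K m) (i : Fin m) :
    (g⁻¹ * h * g).left i =
      (g.left (g.right i))⁻¹ * h.left (g.right i) * g.left (h.right⁻¹ (g.right i)) := rfl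

def wreathSubgroup (Q : Subgroup K) (R : Subgroup (Perm (Fin m))) :
    Subgroup (WreathProductSymm K m) where
  carrier := {g | (∀ i, g.left i ∈ Q) ∧ g.right ∈ R}
  mul_mem' hg hh := ⟨fun i => Q.mul_mem (hg.1 i) (hh.1 _), R.mul_mem hg.2 hh.2⟩
  one_mem' := ⟨fun _ => Q.one_mem, R.one_mem⟩
  inv_mem' hg := ⟨fun _ => Q.inv_mem (hg.1 _), R.inv_mem hg.2⟩

variable {Q : Subgroup K} {R : Subgroup (Perm (Fin m))} {g : WreathProductSymm K m}

open Subgroup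

theorem map_rightHom_wreathSubgroup : (wreathSubgroup Q R).map rightHom = R := by
  ext σ
  refine ⟨?_, fun hσ => ⟨inr σ, ⟨fun _ => Q.one_mem, hσ⟩, rightHom_inr σ⟩⟩
  rintro ⟨g, hg, rfl⟩
  exact hg.2

theorem right_mem_normalizer (hg : g ∈ normalizer (wreathSubgroup Q R : Set _)) :
    g.right ∈ normalizer (R : Set (Perm (Fin m))) := by
  simpa [map_rightHom_wreathSubgroup] using le_normalizer_map rightHom ⟨g, hg, rfl⟩

theorem inv_mul_mul_left_mem_of_mem_normalizer (hg : g ∈ normalizer (wreathSubgroup Q R : Set _))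
    (i : Fin m) {q : K} (hq : q ∈ Q) : (g.left i)⁻¹ * q * g.left i ∈ Q := by
  have h := ((mem_normalizer_iff''.1 hg (inl fun _ => q)).1 ⟨fun _ => hq, R.one_mem⟩).1
    (g.right⁻¹ i)
  simpa [conj_left_apply] using h

theorem left_mem_normalizer (hg : g ∈ normalizer (wreathSubgroup Q R : Set _)) (i : Fin m) :
    g.left i ∈ normalizer (Q : Set K) := by
  refine mem_normalizer_iff''.2 fun q =>
    ⟨inv_mul_mul_left_mem_of_mem_normalizer hg i, fun hq => ?_⟩
  have h := inv_mul_mul_left_mem_of_mem_normalizer (inv_mem hg) (g.right⁻¹ i) hq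
  simpa [inv_left_apply, mul_assoc] using h

theorem inv_left_mul_left_mem_of_mem_normalizer (hg : g ∈ normalizer (wreathSubgroup Q R : Set _))
    {r : Perm (Fin m)} (hr : r ∈ R) (i : Fin m) : (g.left i)⁻¹ * g.left (r i) ∈ Q := by
  have h := ((mem_normalizer_iff''.1 hg (inr r⁻¹)).1 ⟨fun _ => Q.one_mem, R.inv_mem hr⟩).1
    (g.right⁻¹ i)
  simpa [conj_left_apply] using h

theorem inv_mul_mul_mem_wreathSubgroup (hx : ∀ i, g.left i ∈ normalizer (Q : Set K))
    (hσ : g.right ∈ normalizer (R : Set (Perm (Fin m))))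
    (horb : ∀ r ∈ R, ∀ i, (g.left i)⁻¹ * g.left (r i) ∈ Q) {h : WreathProductSymm K m}
    (hh : h ∈ wreathSubgroup Q R) : g⁻¹ * h * g ∈ wreathSubgroup Q R := by
  refine ⟨fun i => ?_, (mem_normalizer_iff''.1 hσ _).1 hh.2⟩
  set j := g.right i
  have hconj : (g.left j)⁻¹ * h.left j * g.left j ∈ Q :=
    (mem_normalizer_iff''.1 (hx j) _).1 (hh.1 j)
  have hshift : (g.left j)⁻¹ * g.left (h.right⁻¹ j) ∈ Q := horb _ (R.inv_mem hh.2) j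
  rw [conj_left_apply]
  simpa only [mul_assoc, mul_inv_cancel_left] using Q.mul_mem hconj hshift

theorem inv_left_mul_left_mem_inv (hx : ∀ i, g.left i ∈ normalizer (Q : Set K))
    (hσ : g.right ∈ normalizer (R : Set (Perm (Fin m))))
    (horb : ∀ r ∈ R, ∀ i, (g.left i)⁻¹ * g.left (r i) ∈ Q) {r : Perm (Fin m)} (hr : r ∈ R)
    (i : Fin m) : (g⁻¹.left i)⁻¹ * g⁻¹.left (r i) ∈ Q := by
  have hρ : g.right * r * g.right⁻¹ ∈ R := (mem_normalizer_iff.1 hσ r).1 hr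
  have h := (mem_normalizer_iff.1 (hx (g.right i)) _).1 (Q.inv_mem (horb _ hρ (g.right i)))
  simpa [inv_left_apply, mul_assoc] using h

theorem mem_normalizer_wreathSubgroup_iff :
    g ∈ normalizer (wreathSubgroup Q R : Set _) ↔
      (∀ i, g.left i ∈ normalizer (Q : Set K)) ∧ g.right ∈ normalizer (R : Set (Perm (Fin m))) ∧
        ∀ i j, (∃ r ∈ R, r i = j) → (g.left i)⁻¹ * g.left j ∈ Q := by
  have orbit_iff : (∀ i j, (∃ r ∈ R, r i = j) → (g.left i)⁻¹ * g.left j ∈ Q) ↔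
      ∀ r ∈ R, ∀ i, (g.left i)⁻¹ * g.left (r i) ∈ Q := by
    grind
  rw [orbit_iff]
  refine ⟨fun hg => ⟨left_mem_normalizer hg, right_mem_normalizer hg,
    fun r hr => inv_left_mul_left_mem_of_mem_normalizer hg hr⟩, ?_⟩
  rintro ⟨hx, hσ, horb⟩
  refine mem_normalizer_iff''.2 fun h => ⟨inv_mul_mul_mem_wreathSubgroup hx hσ horb, fun hh => ?_⟩
  simpa [mul_assoc] using inv_mul_mul_mem_wreathSubgroup (g := g⁻¹) (fun i => inv_mem (hx _))
    (inv_mem hσ) (fun r hr => inv_left_mul_left_mem_inv hx hσ horb hr) hh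

end WreathProductSymm

theorem wreath_sylow_normalizer_general (p : ℕ) (hp : p.Prime) (K : Type) [Group K] [Fintype K]
    (Q : Sylow p K) (m : ℕ) (R : Sylow p (Equiv.Perm (Fin m)))
    (P : Subgroup (WreathProductSymm K m))
    (hP : ∀ g : WreathProductSymm K m,
      g ∈ P ↔ (∀ i : Fin m, g.left i ∈ Q) ∧ g.right ∈ R) :
    (∃ S : Sylow p (WreathProductSymm K m), (S : Subgroup (WreathProductSymm K m)) = P) ∧
    (∀ g : WreathProductSymm K m, g ∈ Subgroup.normalizer (P : Set (WreathProductSymm K m)) ↔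
      (∀ i : Fin m, g.left i ∈ Subgroup.normalizer ((Q : Subgroup K) : Set K)) ∧
      g.right ∈ Subgroup.normalizer ((R : Subgroup (Equiv.Perm (Fin m))) : Set (Equiv.Perm (Fin m))) ∧
      (∀ i j : Fin m, (∃ r ∈ (R : Subgroup (Equiv.Perm (Fin m))), r i = j) →
        (g.left i)⁻¹ * g.left j ∈ Q)) := by
  have : Fact p.Prime := ⟨hp⟩
  obtain rfl : P = WreathProductSymm.wreathSubgroup Q R := Subgroup.ext hP
  refine ⟨SemidirectProduct.exists_sylow_eq (Sylow.pi fun _ => Q) R _ fun g => ?_,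
    fun g => WreathProductSymm.mem_normalizer_wreathSubgroup_iff⟩
  exact (and_congr_left' Sylow.mem_pi).symm

/-- Let `p` be a prime, `K` a finite group with `Q` a Sylow `p`-subgroup, `m ≥ 1`, and
`H = K ≀ S_m`.  Let `R` be a Sylow `p`-subgroup of `S_m` and let
`P = Q ≀ R = {(x₁,…,x_m; z) | xᵢ ∈ Q, z ∈ R}`.  Then `P` is a Sylow `p`-subgroup of `H`,
and `N_H(P)` consists exactly of the elements `(x₁,…,x_m; z)` with `xᵢ ∈ N_K(Q)`,
`z ∈ N_{S_m}(R)`, and `xᵢ⁻¹ xⱼ ∈ Q` whenever `i` and `j` lie in the same `R`-orbit. -/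
theorem wreath_sylow_normalizer (p : ℕ) (hp : p.Prime) (K : Type) [Group K] [Fintype K]
    (Q : Sylow p K) (m : ℕ) (hm : 1 ≤ m) (R : Sylow p (Equiv.Perm (Fin m)))
    (P : Subgroup (WreathProductSymm K m))
    (hP : ∀ g : WreathProductSymm K m,
      g ∈ P ↔ (∀ i : Fin m, g.left i ∈ Q) ∧ g.right ∈ R) :
    (∃ S : Sylow p (WreathProductSymm K m), (S : Subgroup (WreathProductSymm K m)) = P) ∧
    (∀ g : WreathProductSymm K m, g ∈ Subgroup.normalizer (P : Set (WreathProductSymm K m)) ↔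
      (∀ i : Fin m, g.left i ∈ Subgroup.normalizer ((Q : Subgroup K) : Set K)) ∧
      g.right ∈ Subgroup.normalizer ((R : Subgroup (Equiv.Perm (Fin m))) : Set (Equiv.Perm (Fin m))) ∧
      (∀ i j : Fin m, (∃ r ∈ (R : Subgroup (Equiv.Perm (Fin m))), r i = j) →
        (g.left i)⁻¹ * g.left j ∈ Q)) :=
  wreath_sylow_normalizer_general p hp K Q m R P hP
end
end
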